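/- For κ > 0 and d = x - x' ∈ [0, 1), the periodic-summation Matérn-1/2 kernel on the circle agrees (up to normalization) with the spectral-series kernel: sinh(1/(2κ))⁻¹ · cosh((d' - 1/2)/κ), where d' = min(d, 1-d), equals 2κ⁻¹ ∑_{n ∈ ℤ} (κ⁻² + 4π²n²)⁻¹ e^{2πin d}. -/

import Mathlib

/-!
On `[0, 1)` both sides are the `1`-periodic function `x ↦ cosh ((x - 1/2)/κ)`, evaluated at `d`
(on the left because `cosh` is even and `min d (1 - d)` is `d` or `1 - d`). Its Fourier
coefficients `2κ⁻¹ sinh (1/(2κ)) / (κ⁻² + 4π²n²)` come from the antiderivative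
`e^{cx} (c cosh (a (x - 1/2)) - a sinh (a (x - 1/2))) / (c² - a²)` of `e^{cx} cosh (a (x - 1/2))`
(with `a = 1/κ`, `c = -2πin`); they are summable, so the Fourier series converges to the
function pointwise.
-/

open Real Complex

theorem hasDerivAt_cexp_mul_cosh_sub_sinh (a b c z : ℂ) :
    HasDerivAt (fun z => cexp (c * z) * (c * cosh (a * (z - b)) - a * sinh (a * (z - b))))
      ((c ^ 2 - a ^ 2) * (cexp (c * z) * cosh (a * (z - b)))) z := by
  have hlin : HasDerivAt (fun z => a * (z - b)) a z := by
    simpa using ((hasDerivAt_id z).sub_const b).const_mul a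
  have hexp : HasDerivAt (fun z => cexp (c * z)) (cexp (c * z) * c) z := by
    simpa using ((hasDerivAt_id z).const_mul c).cexp
  refine (hexp.fun_mul ((hlin.ccosh.const_mul c).fun_sub (hlin.csinh.const_mul a))).congr_deriv ?_
  ring

theorem integral_cexp_mul_cosh_sub_half {a c : ℂ} (hc : cexp c = 1) (hac : c ^ 2 ≠ a ^ 2) :
    ∫ x in (0:ℝ)..1, cexp (c * x) * cosh (a * (x - 1 / 2))
      = 2 * a * sinh (a / 2) / (a ^ 2 - c ^ 2) := by
  have hFTC := intervalIntegral.integral_eq_sub_of_hasDerivAt (a := 0) (b := 1)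
    (fun x _ => (hasDerivAt_cexp_mul_cosh_sub_sinh a (1 / 2) c x).comp_ofReal)
    (by apply Continuous.intervalIntegrable; fun_prop)
  rw [intervalIntegral.integral_const_mul] at hFTC
  have hhalf : a * (0 - 1 / 2) = -(a / 2) := by ring
  have hhalf' : a * (1 - 1 / 2) = a / 2 := by ring
  simp only [ofReal_one, ofReal_zero, mul_one, mul_zero, hc, Complex.exp_zero, hhalf, hhalf',
    Complex.cosh_neg, Complex.sinh_neg] at hFTC
  rw [eq_div_iff (sub_ne_zero.mpr hac.symm)]
  linear_combination (-1 : ℂ) * hFTC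

noncomputable def periodicCosh (a : ℂ) : C(AddCircle (1 : ℝ), ℂ) :=
  ⟨AddCircle.liftIco 1 0 fun x => cosh (a * (x - 1 / 2)),
    AddCircle.liftIco_zero_continuous
      (by simp only [ofReal_zero, ofReal_one]; rw [← Complex.cosh_neg]; ring_nf) (by fun_prop)⟩

theorem periodicCosh_coe_apply (a : ℂ) {x : ℝ} (hx : x ∈ Set.Ico 0 1) :
    periodicCosh a x = cosh (a * (x - 1 / 2)) :=
  AddCircle.liftIco_zero_coe_apply (f := fun x : ℝ => cosh (a * (x - 1 / 2))) hx

theorem fourierCoeff_periodicCosh (a : ℂ) (n : ℤ) (h : a ^ 2 + 4 * π ^ 2 * n ^ 2 ≠ 0) :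
    fourierCoeff (periodicCosh a) n = 2 * a * sinh (a / 2) / (a ^ 2 + 4 * π ^ 2 * n ^ 2) := by
  have hsq : (-(2 * π * I * n)) ^ 2 = -(4 * π ^ 2 * n ^ 2 : ℂ) := by
    linear_combination (4 * π ^ 2 * n ^ 2 : ℂ) * I_sq
  have hexp : cexp (-(2 * π * I * n)) = 1 := by
    rw [show -(2 * π * I * n) = ((-n : ℤ) : ℂ) * (2 * π * I) by push_cast; ring]
    exact exp_int_mul_two_pi_mul_I _
  rw [periodicCosh, ContinuousMap.coe_mk, fourierCoeff_liftIco_eq, fourierCoeffOn_eq_integral]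
  have hint := integral_cexp_mul_cosh_sub_half (a := a) hexp
    (by rw [hsq]; contrapose! h; linear_combination -h)
  rw [hsq, sub_neg_eq_add] at hint
  simp only [fourier_coe_apply, zero_add, sub_zero, ofReal_one, div_one, one_smul, smul_eq_mul,
    Int.cast_neg]
  rw [← hint]
  congr 1 with x
  ring_nf

theorem summable_inv_add_mul_sq {b c : ℝ} (hb : 0 < b) (hc : 0 < c) :
    Summable fun n : ℤ => (b + c * n ^ 2)⁻¹ := by
  refine (((summable_one_div_int_pow (p := 2)).mpr one_lt_two).mul_left c⁻¹)
    |>.of_norm_bounded_eventually ?_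
  filter_upwards [Filter.eventually_cofinite_ne 0] with n hn
  have hn' : (0 : ℝ) < n ^ 2 := sq_pos_of_ne_zero (Int.cast_ne_zero.mpr hn)
  rw [norm_inv, Real.norm_of_nonneg (by positivity), one_div, ← mul_inv]
  exact inv_anti₀ (by positivity) (by linarith)

theorem hasSum_fourier_periodicCosh {a : ℝ} (ha : a ≠ 0) {x : ℝ} (hx : x ∈ Set.Ico 0 1) :
    HasSum (fun n : ℤ => ((2 * a * Real.sinh (a / 2) / (a ^ 2 + 4 * π ^ 2 * n ^ 2) : ℝ) : ℂ) *
      cexp (2 * π * I * n * x)) (Real.cosh (a * (x - 1 / 2))) := by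
  have hcoeff (n : ℤ) : fourierCoeff (periodicCosh a) n
      = ((2 * a * Real.sinh (a / 2) / (a ^ 2 + 4 * π ^ 2 * n ^ 2) : ℝ) : ℂ) := by
    have hpos : 0 < a ^ 2 + 4 * π ^ 2 * n ^ 2 := by positivity
    push_cast
    exact fourierCoeff_periodicCosh a n (by exact_mod_cast hpos.ne')
  have hsum : Summable (fourierCoeff (periodicCosh a)) := by
    refine (summable_ofReal.mpr ?_).congr fun n => (hcoeff n).symm
    simp_rw [div_eq_mul_inv]
    exact (summable_inv_add_mul_sq (by positivity) (by positivity)).mul_left _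
  have := has_pointwise_sum_fourier_series_of_summable hsum x
  simpa only [hcoeff, fourier_coe_apply, ofReal_one, div_one, smul_eq_mul,
    periodicCosh_coe_apply a hx, ofReal_cosh, ofReal_mul, ofReal_sub, ofReal_div, ofReal_ofNat]
    using this

/-- Poisson-summation identity for the Matérn-1/2 kernel on the circle: for `κ > 0`
and `d = x - x' ∈ [0,1)`, with `d' = min(d, 1-d)` the circle distance,
`sinh(1/(2κ))⁻¹ cosh((d' - 1/2)/κ) = (2/κ) ∑_{n ∈ ℤ} (κ⁻² + 4π²n²)⁻¹ e^{2πind}`. -/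
theorem matern_half_circle_poisson_summation (κ d : ℝ) (hκ : 0 < κ)
    (hd0 : 0 ≤ d) (hd1 : d < 1) :
    ((Real.sinh (1/(2*κ)))⁻¹ * Real.cosh ((min d (1 - d) - 1/2) / κ) : ℂ)
      = (2 / κ : ℂ) * ∑' n : ℤ,
          (((1/κ^2 + 4 * Real.pi^2 * (n:ℝ)^2)⁻¹ : ℝ) : ℂ) *
            Complex.exp (2 * Real.pi * Complex.I * (n : ℂ) * (d : ℂ)) := by
  have hmin : Real.cosh ((min d (1 - d) - 1 / 2) / κ) = Real.cosh (κ⁻¹ * (d - 1 / 2)) := by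
    rcases le_total d (1 - d) with h | h
    · rw [min_eq_left h, div_eq_inv_mul]
    · rw [min_eq_right h, ← Real.cosh_neg]
      ring_nf
  have hcoeff (n : ℤ) : (Real.sinh (1 / (2 * κ)))⁻¹ *
      (2 * κ⁻¹ * Real.sinh (κ⁻¹ / 2) / (κ⁻¹ ^ 2 + 4 * π ^ 2 * n ^ 2))
        = 2 / κ * (1 / κ ^ 2 + 4 * π ^ 2 * n ^ 2)⁻¹ := by
    have hsinh : Real.sinh (1 / (2 * κ)) ≠ 0 := (Real.sinh_pos_iff.mpr (by positivity)).ne'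
    rw [show κ⁻¹ / 2 = 1 / (2 * κ) by ring]
    field_simp
  have hseries := (hasSum_fourier_periodicCosh (inv_ne_zero hκ.ne') ⟨hd0, hd1⟩).tsum_eq
  rw [hmin, ← hseries, ← tsum_mul_left, ← tsum_mul_left]
  congr 1 with n
  rw [← mul_assoc, ← mul_assoc]
  congr 1
  exact_mod_cast hcoeff n
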